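/- Let f be holomorphic on an open set U ⊆ ℂ and let φ = (|f|²+1)^{-1}(2 Re f, 2 Im f, |f|²-1): U → S² ⊂ ℝ³. Then each component φ_j satisfies the equation ∂_{z}∂_{z̄} φ_j = -(2|f'|²/(|f|²+1)²) φ_j; that is, φ_j is a 2-eigenfunction of the Laplacian of the pullback metric g = 4|f'|²(|f|²+1)^{-2}|dz|² wherever f' ≠ 0. -/

import Mathlib

open Complex

/-- Wirtinger derivative `∂_z f = (1/2)(∂_x f - i ∂_y f)`. -/
noncomputable def wz {E : Type*} [NormedAddCommGroup E] [NormedSpace ℂ E]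
    (f : ℂ → E) (z : ℂ) : E :=
  (2⁻¹ : ℂ) • (fderiv ℝ f z 1 - Complex.I • fderiv ℝ f z Complex.I)

/-- Wirtinger derivative `∂_z̄ f = (1/2)(∂_x f + i ∂_y f)`. -/
noncomputable def wzb {E : Type*} [NormedAddCommGroup E] [NormedSpace ℂ E]
    (f : ℂ → E) (z : ℂ) : E :=
  (2⁻¹ : ℂ) • (fderiv ℝ f z 1 + Complex.I • fderiv ℝ f z Complex.I)

/-- The ℂ-bilinear product `(v,w) = Σ vᵢ wᵢ` on ℂ³. -/
noncomputable def bil (v w : Fin 3 → ℂ) : ℂ := ∑ i, v i * w i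

/-- The Hermitian product `⟨v,w⟩ = Σ vᵢ w̄ᵢ` on ℂ³. -/
noncomputable def herm (v w : Fin 3 → ℂ) : ℂ := ∑ i, v i * (starRingEnd ℂ) (w i)

/-- Inverse stereographic projection of a complex-valued function:
`φ = (|f|²+1)⁻¹ (2 Re f, 2 Im f, |f|² - 1)`, viewed as a map to ℝ³ ⊂ ℂ³. -/
noncomputable def stereo (f : ℂ → ℂ) (z : ℂ) : Fin 3 → ℂ :=
  (((Complex.normSq (f z) + 1 : ℝ) : ℂ))⁻¹ •
    ![((2 * (f z).re : ℝ) : ℂ), ((2 * (f z).im : ℝ) : ℂ),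
      ((Complex.normSq (f z) - 1 : ℝ) : ℂ)]

/-! ### Auxiliary Wirtinger calculus -/

/-- The real-linear map `v ↦ p v + q v̄`. -/
noncomputable def Pmap (p q : ℂ) : ℂ →L[ℝ] ℂ :=
  p • (ContinuousLinearMap.id ℝ ℂ) + q • (Complex.conjCLE.toContinuousLinearMap)

@[simp] lemma Pmap_apply (p q v : ℂ) : Pmap p q v = p * v + q * (starRingEnd ℂ) v := by
  simp [Pmap, smul_eq_mul]

/-- `g` has Wirtinger derivatives `p = ∂_z g`, `q = ∂_z̄ g` at `z`. -/
def Wd (g : ℂ → ℂ) (p q z : ℂ) : Prop := HasFDerivAt g (Pmap p q) z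

namespace Wd

variable {g h : ℂ → ℂ} {p q r s z : ℂ}

lemma diff (hg : Wd g p q z) : DifferentiableAt ℝ g z := hg.differentiableAt

lemma wz_eq (hg : Wd g p q z) : wz g z = p := by
  rw [wz, hg.fderiv]
  simp [Complex.conj_I, smul_eq_mul]
  ring_nf
  rw [Complex.I_sq]
  ring

lemma wzb_eq (hg : Wd g p q z) : wzb g z = q := by
  rw [wzb, hg.fderiv]
  simp [Complex.conj_I, smul_eq_mul]
  ring_nf
  rw [Complex.I_sq]
  ring

lemma of_holo (hg : DifferentiableAt ℂ g z) : Wd g (deriv g z) 0 z := by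
  have h1 := hg.hasDerivAt.hasFDerivAt.restrictScalars ℝ
  have h2 : (ContinuousLinearMap.toSpanSingleton ℂ (deriv g z)).restrictScalars ℝ
      = Pmap (deriv g z) 0 := by
    ext v
    simp [mul_comm]
  rwa [h2] at h1

lemma conj (hg : Wd g p q z) :
    Wd (fun y => (starRingEnd ℂ) (g y)) ((starRingEnd ℂ) q) ((starRingEnd ℂ) p) z := by
  have h1 := Complex.conjCLE.toContinuousLinearMap.hasFDerivAt.comp z hg
  have h2 : Complex.conjCLE.toContinuousLinearMap.comp (Pmap p q)
      = Pmap ((starRingEnd ℂ) q) ((starRingEnd ℂ) p) := by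
    ext v
    simp [Complex.conjCLE_apply, map_add, map_mul]
    ring
  rwa [h2] at h1

lemma add (hg : Wd g p q z) (hh : Wd h r s z) :
    Wd (fun y => g y + h y) (p + r) (q + s) z := by
  have h1 := HasFDerivAt.add (hg : HasFDerivAt g (Pmap p q) z)
    (hh : HasFDerivAt h (Pmap r s) z)
  have h2 : Pmap p q + Pmap r s = Pmap (p + r) (q + s) := by
    ext v; simp; ring
  rwa [h2] at h1

lemma sub (hg : Wd g p q z) (hh : Wd h r s z) :
    Wd (fun y => g y - h y) (p - r) (q - s) z := by
  have h1 := HasFDerivAt.sub (hg : HasFDerivAt g (Pmap p q) z)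
    (hh : HasFDerivAt h (Pmap r s) z)
  have h2 : Pmap p q - Pmap r s = Pmap (p - r) (q - s) := by
    ext v; simp; ring
  rwa [h2] at h1

lemma const (c z : ℂ) : Wd (fun _ => c) 0 0 z := by
  have h1 := hasFDerivAt_const (𝕜 := ℝ) c z
  have h2 : (0 : ℂ →L[ℝ] ℂ) = Pmap 0 0 := by ext v; simp
  rwa [h2] at h1

lemma add_const (hg : Wd g p q z) (c : ℂ) : Wd (fun y => g y + c) p q z := by
  have h1 := Wd.add hg (const c z)
  simpa using h1

lemma mul (hg : Wd g p q z) (hh : Wd h r s z) :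
    Wd (fun y => g y * h y) (p * h z + g z * r) (q * h z + g z * s) z := by
  have h1 := HasFDerivAt.mul (hg : HasFDerivAt g (Pmap p q) z)
    (hh : HasFDerivAt h (Pmap r s) z)
  have h2 : g z • Pmap r s + h z • Pmap p q
      = Pmap (p * h z + g z * r) (q * h z + g z * s) := by
    ext v; simp [smul_eq_mul]; ring
  rwa [h2] at h1

lemma inv (hg : Wd g p q z) (hz : g z ≠ 0) :
    Wd (fun y => (g y)⁻¹) (-p / (g z * g z)) (-q / (g z * g z)) z := by
  have h1 := (hasDerivAt_inv hz).hasFDerivAt.restrictScalars ℝ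
  have h2 := h1.comp z (hg : HasFDerivAt g (Pmap p q) z)
  have h3 : ((ContinuousLinearMap.toSpanSingleton ℂ
        (-(g z ^ 2)⁻¹)).restrictScalars ℝ).comp (Pmap p q)
      = Pmap (-p / (g z * g z)) (-q / (g z * g z)) := by
    ext v
    simp [smul_eq_mul]
    field_simp
    ring
  rwa [h3] at h2

end Wd

lemma wz_congr {g h : ℂ → Fin 3 → ℂ} {z : ℂ}
    (he : g =ᶠ[nhds z] h) : wz g z = wz h z := by
  rw [wz, wz, he.fderiv_eq]

lemma wz_pi_apply {g : ℂ → Fin 3 → ℂ} {z : ℂ} (hg : DifferentiableAt ℝ g z) (i : Fin 3) :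
    wz g z i = wz (fun w => g w i) z := by
  have h1 : HasFDerivAt (fun w => g w i)
      ((ContinuousLinearMap.proj (R := ℝ) (φ := fun _ : Fin 3 => ℂ) i).comp (fderiv ℝ g z)) z :=
    (ContinuousLinearMap.proj (R := ℝ) (φ := fun _ : Fin 3 => ℂ) i).hasFDerivAt.comp z
      hg.hasFDerivAt
  rw [wz, wz, h1.fderiv]
  simp

lemma wzb_pi_apply {g : ℂ → Fin 3 → ℂ} {z : ℂ} (hg : DifferentiableAt ℝ g z) (i : Fin 3) :
    wzb g z i = wzb (fun w => g w i) z := by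
  have h1 : HasFDerivAt (fun w => g w i)
      ((ContinuousLinearMap.proj (R := ℝ) (φ := fun _ : Fin 3 => ℂ) i).comp (fderiv ℝ g z)) z :=
    (ContinuousLinearMap.proj (R := ℝ) (φ := fun _ : Fin 3 => ℂ) i).hasFDerivAt.comp z
      hg.hasFDerivAt
  rw [wzb, wzb, h1.fderiv]
  simp

/-- `stereo f` written in terms of `f` and `conj ∘ f`. -/
noncomputable def st3 (f : ℂ → ℂ) (y : ℂ) : Fin 3 → ℂ :=
  ![(f y + (starRingEnd ℂ) (f y)) * (f y * (starRingEnd ℂ) (f y) + 1)⁻¹,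
    (-Complex.I * (f y - (starRingEnd ℂ) (f y))) * (f y * (starRingEnd ℂ) (f y) + 1)⁻¹,
    (f y * (starRingEnd ℂ) (f y) - 1) * (f y * (starRingEnd ℂ) (f y) + 1)⁻¹]

lemma stereo_eq_st3 (f : ℂ → ℂ) : stereo f = st3 f := by
  funext y i
  have hm : (f y) * (starRingEnd ℂ) (f y) = ((Complex.normSq (f y) : ℝ) : ℂ) :=
    Complex.mul_conj _
  have ha : f y + (starRingEnd ℂ) (f y) = ((2 * (f y).re : ℝ) : ℂ) := by
    rw [Complex.add_conj]
  have hs : f y - (starRingEnd ℂ) (f y) = ((2 * (f y).im : ℝ) : ℂ) * Complex.I := by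
    rw [Complex.sub_conj]
  fin_cases i
  · simp [stereo, st3, smul_eq_mul, hm, ha]
    ring
  · simp [stereo, st3, smul_eq_mul, hm, hs]
    rw [show Complex.I * (2 * ((f y).im : ℂ) * Complex.I)
        = 2 * ((f y).im : ℂ) * (Complex.I * Complex.I) by ring, Complex.I_mul_I]
    ring
  · simp [stereo, st3, smul_eq_mul, hm]
    ring

/-- The value of `∂_z̄ (stereo f)`. -/
noncomputable def psi3 (f : ℂ → ℂ) (y : ℂ) : Fin 3 → ℂ :=
  ![((starRingEnd ℂ) (deriv f y) * (1 - f y * f y)) *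
      ((f y * (starRingEnd ℂ) (f y) + 1) * (f y * (starRingEnd ℂ) (f y) + 1))⁻¹,
    ((starRingEnd ℂ) (deriv f y) * Complex.I * (1 + f y * f y)) *
      ((f y * (starRingEnd ℂ) (f y) + 1) * (f y * (starRingEnd ℂ) (f y) + 1))⁻¹,
    ((starRingEnd ℂ) (deriv f y) * (2 * f y)) *
      ((f y * (starRingEnd ℂ) (f y) + 1) * (f y * (starRingEnd ℂ) (f y) + 1))⁻¹]

lemma denom_ne_zero (f : ℂ → ℂ) (w : ℂ) : f w * (starRingEnd ℂ) (f w) + 1 ≠ 0 := by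
  rw [Complex.mul_conj]
  intro h
  have h2 := congrArg Complex.re h
  simp at h2
  nlinarith [Complex.normSq_nonneg (f w)]

lemma wzb_st3 (U : Set ℂ) (hU : IsOpen U) (f : ℂ → ℂ) (hf : DifferentiableOn ℂ f U)
    {w : ℂ} (hw : w ∈ U) : wzb (st3 f) w = psi3 f w := by
  have hfw : DifferentiableAt ℂ f w := hf.differentiableAt (hU.mem_nhds hw)
  have W1 : Wd f (deriv f w) 0 w := Wd.of_holo hfw
  have W2 : Wd (fun y => (starRingEnd ℂ) (f y)) 0 ((starRingEnd ℂ) (deriv f w)) w := by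
    simpa using W1.conj
  have hD := denom_ne_zero f w
  have WD := Wd.add_const (W1.mul W2) 1
  have WDi := WD.inv hD
  have e0 : (fun y => st3 f y 0)
      = fun y => (f y + (starRingEnd ℂ) (f y)) * (f y * (starRingEnd ℂ) (f y) + 1)⁻¹ := by
    funext y; simp [st3]
  have e1 : (fun y => st3 f y 1)
      = fun y => (-Complex.I * (f y - (starRingEnd ℂ) (f y))) *
          (f y * (starRingEnd ℂ) (f y) + 1)⁻¹ := by
    funext y; simp [st3]
  have e2 : (fun y => st3 f y 2)
      = fun y => (f y * (starRingEnd ℂ) (f y) - 1) * (f y * (starRingEnd ℂ) (f y) + 1)⁻¹ := by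
    funext y; simp [st3]
  have W0 := (W1.add W2).mul WDi
  have Wc1 := ((Wd.const (-Complex.I) w).mul (W1.sub W2)).mul WDi
  have Wc2 := ((W1.mul W2).sub (Wd.const 1 w)).mul WDi
  have hdiff : DifferentiableAt ℝ (st3 f) w := by
    apply differentiableAt_pi.2
    intro i
    fin_cases i
    · exact e0 ▸ W0.diff
    · exact e1 ▸ Wc1.diff
    · exact e2 ▸ Wc2.diff
  funext i
  fin_cases i
  · show wzb (st3 f) w 0 = psi3 f w 0
    rw [wzb_pi_apply hdiff 0, e0, W0.wzb_eq]
    simp only [psi3, Matrix.cons_val_zero]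
    field_simp
    ring
  · show wzb (st3 f) w 1 = psi3 f w 1
    rw [wzb_pi_apply hdiff 1, e1, Wc1.wzb_eq]
    simp only [psi3, Matrix.cons_val_one, Matrix.head_cons, Matrix.cons_val_zero]
    field_simp
    ring
  · show wzb (st3 f) w 2 = psi3 f w 2
    rw [wzb_pi_apply hdiff 2, e2, Wc2.wzb_eq]
    simp only [psi3, Matrix.cons_val_two, Matrix.tail_cons, Matrix.head_cons]
    field_simp
    ring

theorem stmt6 (U : Set ℂ) (hU : IsOpen U) (f : ℂ → ℂ)
    (hf : DifferentiableOn ℂ f U) :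
    ∀ z ∈ U, wz (wzb (stereo f)) z =
      -(((2 * Complex.normSq (deriv f z) / (Complex.normSq (f z) + 1) ^ 2 : ℝ) : ℂ)) •
        stereo f z := by
  intro z hz
  have hzU : U ∈ nhds z := hU.mem_nhds hz
  have hfz : DifferentiableAt ℂ f z := hf.differentiableAt hzU
  have hdf : DifferentiableAt ℂ (deriv f) z :=
    (((hf.analyticOnNhd hU).deriv) z hz).differentiableAt
  rw [stereo_eq_st3]
  have hcong : wzb (st3 f) =ᶠ[nhds z] psi3 f :=
    Filter.eventuallyEq_of_mem hzU fun w hw => wzb_st3 U hU f hf hw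
  rw [wz_congr hcong]
  -- now compute ∂_z of psi3
  have W1 : Wd f (deriv f z) 0 z := Wd.of_holo hfz
  have W2 : Wd (fun y => (starRingEnd ℂ) (f y)) 0 ((starRingEnd ℂ) (deriv f z)) z := by
    simpa using W1.conj
  have Wd1 : Wd (deriv f) (deriv (deriv f) z) 0 z := Wd.of_holo hdf
  have Wdc : Wd (fun y => (starRingEnd ℂ) (deriv f y)) 0
      ((starRingEnd ℂ) (deriv (deriv f) z)) z := by
    simpa using Wd1.conj
  have hD := denom_ne_zero f z
  have hDD : (f z * (starRingEnd ℂ) (f z) + 1) * (f z * (starRingEnd ℂ) (f z) + 1) ≠ 0 :=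
    mul_ne_zero hD hD
  have WD := Wd.add_const (W1.mul W2) 1
  have WDDi := (WD.mul WD).inv hDD
  have P0 := (Wdc.mul ((Wd.const 1 z).sub (W1.mul W1))).mul WDDi
  have P1 := ((Wdc.mul (Wd.const Complex.I z)).mul ((Wd.const 1 z).add (W1.mul W1))).mul WDDi
  have P2 := (Wdc.mul ((Wd.const 2 z).mul W1)).mul WDDi
  have e0 : (fun y => psi3 f y 0)
      = fun y => ((starRingEnd ℂ) (deriv f y) * (1 - f y * f y)) *
          ((f y * (starRingEnd ℂ) (f y) + 1) * (f y * (starRingEnd ℂ) (f y) + 1))⁻¹ := by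
    funext y; simp [psi3]
  have e1 : (fun y => psi3 f y 1)
      = fun y => (((starRingEnd ℂ) (deriv f y) * Complex.I) * (1 + f y * f y)) *
          ((f y * (starRingEnd ℂ) (f y) + 1) * (f y * (starRingEnd ℂ) (f y) + 1))⁻¹ := by
    funext y; simp [psi3]
  have e2 : (fun y => psi3 f y 2)
      = fun y => ((starRingEnd ℂ) (deriv f y) * (2 * f y)) *
          ((f y * (starRingEnd ℂ) (f y) + 1) * (f y * (starRingEnd ℂ) (f y) + 1))⁻¹ := by
    funext y; simp [psi3]
  have hdiff : DifferentiableAt ℝ (psi3 f) z := by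
    apply differentiableAt_pi.2
    intro i
    fin_cases i
    · exact e0 ▸ P0.diff
    · exact e1 ▸ ((Wdc.mul (Wd.const Complex.I z)).mul
        ((Wd.const 1 z).add (W1.mul W1))).mul WDDi |>.diff
    · exact e2 ▸ P2.diff
  have hns : ((Complex.normSq (deriv f z) : ℝ) : ℂ)
      = deriv f z * (starRingEnd ℂ) (deriv f z) := (Complex.mul_conj _).symm
  have hns2 : ((Complex.normSq (f z) : ℝ) : ℂ)
      = f z * (starRingEnd ℂ) (f z) := (Complex.mul_conj _).symm
  funext i
  fin_cases i
  · show wz (psi3 f) z 0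
      = -(((2 * Complex.normSq (deriv f z) / (Complex.normSq (f z) + 1) ^ 2 : ℝ) : ℂ)) •
        st3 f z 0
    rw [wz_pi_apply hdiff 0, e0, P0.wz_eq]
    simp only [st3, Matrix.cons_val_zero, smul_eq_mul]
    push_cast [hns, hns2]
    field_simp
    ring
  · show wz (psi3 f) z 1
      = -(((2 * Complex.normSq (deriv f z) / (Complex.normSq (f z) + 1) ^ 2 : ℝ) : ℂ)) •
        st3 f z 1
    rw [wz_pi_apply hdiff 1, e1, (((Wdc.mul (Wd.const Complex.I z)).mul
        ((Wd.const 1 z).add (W1.mul W1))).mul WDDi).wz_eq]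
    simp only [st3, Matrix.cons_val_one, Matrix.head_cons, smul_eq_mul]
    push_cast [hns, hns2]
    field_simp
    ring
  · show wz (psi3 f) z 2
      = -(((2 * Complex.normSq (deriv f z) / (Complex.normSq (f z) + 1) ^ 2 : ℝ) : ℂ)) •
        st3 f z 2
    rw [wz_pi_apply hdiff 2, e2, P2.wz_eq]
    simp only [st3, Matrix.cons_val_two, Matrix.tail_cons, Matrix.head_cons, smul_eq_mul]
    push_cast [hns, hns2]
    field_simp
    ring
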